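/- arXiv:2506.12203 — 4 statements merged into one kernel-verified Lean document; each statement's English description precedes it below -/
import Mathlib

section
/- Let T̃ = {t_1 < … < t_z} be a uniformly random z-element subset of {1,…,T-1}, augmented with t_0 = 0 and t_{z+1} = T, and let G = max_{1 ≤ i ≤ z+1} (t_i − t_{i−1}) be the maximum gap. Then for every positive integer t, Pr[G ≥ t] ≤ T · exp(−z·t/T). -/
/-!
A gap of length at least `t` starts either at `0` or at a point `j` of the random set, and in both
cases a block of `t - 1` consecutive integers after it is avoided. Counting the two kinds
separately bounds the number of bad sets by `(z + 1) · C(T - t, z)`, out of `C(T - 1, z)`.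
Deleting the block one integer at a time multiplies the count by at most
`r = 1 - z / (T - 1) ≤ e^{-z/T}` each time. The prefactor `z + 1` is absorbed by the first
factor: `(z + 1) / T · r ≤ e^{-2z/T}` follows from `q (1 - q) ≤ e^{-2q}` at `q = (z + 1) / T`.
For `t = 1` the bound reads `1 ≤ T e^{-z/T}`, and indeed `T e^{-z/T} ≥ T - z ≥ 1`.
-/

open Finset

/-- The maximum gap of the points `S ∪ {0, T}`: for each point `a ∈ {0} ∪ S`, the distance
to the next larger point of `S ∪ {T}`, maximized over `a`. This is the maximum consecutive
difference of the sorted sequence `0 = t₀ < t₁ < ⋯ < t_z < t_{z+1} = T` when `S ⊆ {1,…,T-1}`. -/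
def maxGap (T : ℕ) (S : Finset ℕ) : ℕ :=
  (insert 0 S).sup fun a => (((insert T S).filter (fun b => a < b)).min.untopD T) - a

open Real

theorem Nat.cast_choose_mul_succ {m z : ℕ} :
    (m.choose z : ℝ) * (m + 1) = (m + 1).choose z * (m + 1 - z) := by
  rcases le_or_gt z (m + 1) with hz | hz
  · have h := congrArg (Nat.cast (R := ℝ)) (Nat.choose_mul_succ_eq m z)
    push_cast [Nat.cast_sub hz] at h
    exact h
  · simp [Nat.choose_eq_zero_of_lt hz, Nat.choose_eq_zero_of_lt (by omega : m < z)]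

theorem Nat.choose_le_choose_succ_mul {m n z : ℕ} (hmn : m < n) :
    (m.choose z : ℝ) ≤ (m + 1).choose z * (1 - z / n) := by
  have hmn' : (m + 1 : ℝ) ≤ n := by exact_mod_cast hmn
  calc (m.choose z : ℝ) = (m + 1).choose z * (1 - z / (m + 1)) := by
        field_simp
        linear_combination (Nat.cast_choose_mul_succ (m := m) (z := z))
    _ ≤ (m + 1).choose z * (1 - z / n) := by gcongr

theorem Nat.choose_sub_le_choose_mul_pow {n z : ℕ} (hzn : z ≤ n) (k : ℕ) :
    ((n - k).choose z : ℝ) ≤ n.choose z * (1 - z / n) ^ k := by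
  have hr : (0 : ℝ) ≤ 1 - z / n := by
    rcases n.eq_zero_or_pos with rfl | hn
    · simp
    · rw [sub_nonneg, div_le_one (by positivity)]; exact_mod_cast hzn
  induction k with
  | zero => simp
  | succ k ih =>
    have step : ((n - (k + 1)).choose z : ℝ) ≤ (n - k).choose z * (1 - z / n) := by
      rcases lt_or_ge k n with hk | hk
      · have := Nat.choose_le_choose_succ_mul (z := z) (by omega : n - (k + 1) < n)
        rwa [show n - (k + 1) + 1 = n - k by omega] at this
      · rw [show n - (k + 1) = 0 by omega, show n - k = 0 by omega]
        rcases z.eq_zero_or_pos with rfl | hz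
        · simp
        · simp [Nat.choose_eq_zero_of_lt hz]
    calc _ ≤ _ := step
      _ ≤ n.choose z * (1 - z / n) ^ k * (1 - z / n) := by gcongr
      _ = _ := by ring

theorem exp_two_lt_eight : exp 2 < 8 := by
  have h := exp_one_lt_d9
  have h2 : exp 2 = exp 1 * exp 1 := by rw [← exp_add]; norm_num
  nlinarith [exp_pos 1]

/- With `s = 1 - q ∈ [0, 1]`, the bounds `e² < 8` and `1 + 2s + 2s² ≤ e^{2s}` reduce this to
`10s² - 6s + 1 ≥ 0`, whose discriminant is negative. -/
theorem mul_one_sub_le_exp_neg_two_mul (q : ℝ) : q * (1 - q) ≤ exp (-2 * q) := by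
  rcases lt_or_ge 1 q with hq | hq
  · nlinarith [exp_pos (-2 * q)]
  rcases lt_or_ge q 0 with hq' | hq'
  · nlinarith [exp_pos (-2 * q)]
  have hs := quadratic_le_exp_of_nonneg (by linarith : 0 ≤ 2 * (1 - q))
  have hsplit : exp (-2 * q) = exp (2 * (1 - q)) / exp 2 := by
    rw [← exp_sub]; ring_nf
  rw [hsplit, le_div_iff₀ (exp_pos 2)]
  have hq0 : 0 ≤ q * (1 - q) := mul_nonneg hq' (by linarith)
  nlinarith [mul_le_mul_of_nonneg_left exp_two_lt_eight.le hq0, sq_nonneg (10 * q - 7)]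

theorem div_sub_one_le_exp_two_div {x : ℝ} (hx : 2 ≤ x) : x / (x - 1) ≤ exp (2 / x) := by
  have h := add_one_le_exp (2 / x)
  rw [div_le_iff₀ (by linarith)]
  have : (2 / x + 1) * (x - 1) = x + 1 - 2 / x := by field_simp; ring
  have h2 : 2 / x ≤ 1 := by rw [div_le_one (by linarith)]; linarith
  nlinarith

theorem succ_div_mul_one_sub_div_le_exp {x : ℝ} (hx : 2 ≤ x) (y : ℝ) :
    (y + 1) / x * (1 - y / (x - 1)) ≤ exp (-(2 * y / x)) := by
  have hx1 : 0 < x - 1 := by linarith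
  have key : (y + 1) / x * (1 - y / (x - 1)) = (y + 1) / x * (1 - (y + 1) / x) * (x / (x - 1)) := by
    field_simp; ring
  have hexp : exp (-(2 * y / x)) = exp (-2 * ((y + 1) / x)) * exp (2 / x) := by
    rw [← exp_add]; congr 1; field_simp; ring
  rw [key, hexp]
  exact mul_le_mul (mul_one_sub_le_exp_neg_two_mul _) (div_sub_one_le_exp_two_div hx)
    (by positivity) (exp_pos _).le

theorem one_sub_div_sub_one_le_exp {x y : ℝ} (hx : 1 < x) (hy : 0 ≤ y) :
    1 - y / (x - 1) ≤ exp (-(y / x)) := by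
  have h := add_one_le_exp (-(y / x))
  have : y / x ≤ y / (x - 1) := div_le_div_of_nonneg_left hy (by linarith) (by linarith)
  linarith

theorem one_le_mul_exp_neg_div {x y : ℝ} (hx : 0 < x) (hyx : y ≤ x - 1) :
    1 ≤ x * exp (-(y / x)) := by
  have h := add_one_le_exp (-(y / x))
  have : x * (-(y / x) + 1) = x - y := by field_simp; ring
  nlinarith

theorem succ_mul_pow_le_mul_exp {x y : ℝ} (hx : 2 ≤ x) (hy : 0 ≤ y) (hyx : y ≤ x - 1) (k : ℕ) :
    (y + 1) * (1 - y / (x - 1)) ^ (k + 1) ≤ x * exp (-(y * (k + 2) / x)) := by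
  have hr : 0 ≤ 1 - y / (x - 1) := by
    rw [sub_nonneg, div_le_one (by linarith)]; exact hyx
  calc (y + 1) * (1 - y / (x - 1)) ^ (k + 1)
      = x * ((y + 1) / x * (1 - y / (x - 1))) * (1 - y / (x - 1)) ^ k := by
        field_simp; ring
    _ ≤ x * exp (-(2 * y / x)) * exp (-(y / x)) ^ k := by
        gcongr
        · exact succ_div_mul_one_sub_div_le_exp hx y
        · exact one_sub_div_sub_one_le_exp (by linarith) hy
    _ = x * exp (-(y * (k + 2) / x)) := by
        rw [← exp_nat_mul, mul_assoc, ← exp_add]; congr 2; ring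

theorem exists_gap_of_le_maxGap {T t : ℕ} {S : Finset ℕ} (hT : 0 < T) (hS : ∀ x ∈ S, x < T)
    (ht : 0 < t) (h : t ≤ maxGap T S) : ∃ j ∈ insert 0 S, j + t ≤ T ∧ Disjoint S (Ioo j (j + t)) := by
  obtain ⟨j, hj, hgap⟩ := (Finset.le_sup_iff ht).1 h
  have hjT : j < T := (mem_insert.1 hj).elim (· ▸ hT) (hS j)
  set M := (insert T S).filter (j < ·)
  have hTM : T ∈ M := mem_filter.2 ⟨mem_insert_self _ _, hjT⟩
  have hne : M.Nonempty := ⟨T, hTM⟩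
  rw [← coe_min' hne, WithTop.untopD_coe] at hgap
  refine ⟨j, hj, by have := M.min'_le T hTM; omega, disjoint_left.2 fun x hx hxI => ?_⟩
  have hxM : x ∈ M := mem_filter.2 ⟨mem_insert_of_mem hx, (mem_Ioo.1 hxI).1⟩
  have := M.min'_le x hxM
  have := (mem_Ioo.1 hxI).2
  omega

theorem filter_le_maxGap_subset {T z t : ℕ} (hT : 0 < T) (ht : 0 < t) :
    ((Icc 1 (T - 1)).powersetCard z).filter (t ≤ maxGap T ·) ⊆
      (Icc t (T - 1)).powersetCard z ∪ (Icc 1 (T - t)).biUnion fun j =>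
        ((Icc 1 (T - 1) \ Icc j (j + t - 1)).powersetCard (z - 1)).image (insert j) := by
  intro s hs
  obtain ⟨hs𝒮, hgap⟩ := mem_filter.1 hs
  obtain ⟨hsub, hcard⟩ := mem_powersetCard.1 hs𝒮
  have hsT : ∀ x ∈ s, 1 ≤ x ∧ x < T := fun x hx => by
    have := mem_Icc.1 (hsub hx); omega
  obtain ⟨j, hj, hjt, hdisj⟩ := exists_gap_of_le_maxGap hT (fun x hx => (hsT x hx).2) ht hgap
  have hfree : ∀ x ∈ s, x ∉ Ioo j (j + t) := fun x hx => disjoint_left.1 hdisj hx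
  rcases mem_insert.1 hj with rfl | hjs
  · refine mem_union_left _ (mem_powersetCard.2 ⟨fun x hx => ?_, hcard⟩)
    have := hfree x hx
    simp only [mem_Ioo, mem_Icc] at this ⊢
    have := hsT x hx
    omega
  · refine mem_union_right _ (mem_biUnion.2 ⟨j, ?_, mem_image.2 ⟨s.erase j, ?_, insert_erase hjs⟩⟩)
    · have := hsT j hjs
      exact mem_Icc.2 (by omega)
    refine mem_powersetCard.2 ⟨fun x hx => ?_, by rw [card_erase_of_mem hjs, hcard]⟩
    obtain ⟨hxj, hxs⟩ := mem_erase.1 hx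
    have := hfree x hxs
    simp only [mem_Ioo, mem_Icc, mem_sdiff] at this ⊢
    have := hsT x hxs
    omega

theorem card_filter_le_maxGap_le {T z t : ℕ} (hT : 0 < T) (hz : 0 < z) (ht : 0 < t) :
    #(((Icc 1 (T - 1)).powersetCard z).filter (t ≤ maxGap T ·)) ≤ (z + 1) * (T - t).choose z := by
  have hblock : ∀ j ∈ Icc 1 (T - t),
      #(((Icc 1 (T - 1) \ Icc j (j + t - 1)).powersetCard (z - 1)).image (insert j)) ≤
        (T - t - 1).choose (z - 1) := fun j hj => by
    have hj := mem_Icc.1 hj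
    refine card_image_le.trans_eq ?_
    rw [card_powersetCard, card_sdiff_of_subset (Icc_subset_Icc (by omega) (by omega)),
      Nat.card_Icc, Nat.card_Icc]
    congr 1
    omega
  have hsum : (T - t) * (T - t - 1).choose (z - 1) = z * (T - t).choose z := by
    rcases Nat.eq_zero_or_pos (T - t) with h | h
    · simp [h, Nat.choose_eq_zero_of_lt hz]
    · obtain ⟨n, hn⟩ : ∃ n, T - t = n + 1 := ⟨T - t - 1, by omega⟩
      obtain ⟨k, rfl⟩ : ∃ k, z = k + 1 := ⟨z - 1, by omega⟩
      rw [hn, Nat.add_sub_cancel, Nat.add_sub_cancel, Nat.add_one_mul_choose_eq, mul_comm]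
  calc _ ≤ _ := card_le_card (filter_le_maxGap_subset hT ht)
    _ ≤ (T - t).choose z + (T - t) * (T - t - 1).choose (z - 1) := by
        refine (card_union_le _ _).trans (add_le_add ?_ ?_)
        · rw [card_powersetCard, Nat.card_Icc, show T - 1 + 1 - t = T - t by omega]
        · refine card_biUnion_le.trans ((sum_le_sum hblock).trans_eq ?_)
          rw [sum_const, Nat.card_Icc, smul_eq_mul, Nat.add_sub_cancel]
    _ = (z + 1) * (T - t).choose z := by rw [hsum]; ring

/-- If `T̃` is a uniformly random `z`-element subset of `{1,…,T-1}`, augmented with the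
endpoints `0` and `T`, then for every positive integer `t` the maximum gap `G` satisfies
`Pr[G ≥ t] ≤ T · exp(−z·t/T)`. -/
theorem max_gap_tail_bound (T z t : ℕ) (hT : 2 ≤ T) (hz1 : 1 ≤ z) (hz2 : z ≤ T - 1)
    (ht : 1 ≤ t) :
    let 𝒮 := (Finset.Icc 1 (T - 1)).powersetCard z
    ((𝒮.filter fun s => t ≤ maxGap T s).card : ℝ) / (𝒮.card : ℝ)
      ≤ (T : ℝ) * Real.exp (-((z : ℝ) * (t : ℝ) / (T : ℝ))) := by
  intro 𝒮
  have h𝒮 : #𝒮 = (T - 1).choose z := by simp [𝒮, Nat.card_Icc]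
  have hT1 : ((T - 1 : ℕ) : ℝ) = T - 1 := by rw [Nat.cast_sub (by omega), Nat.cast_one]
  have hzT : (z : ℝ) ≤ T - 1 := by rw [← hT1]; exact_mod_cast hz2
  rw [div_le_iff₀ (by rw [h𝒮]; exact_mod_cast Nat.choose_pos hz2)]
  obtain rfl | ⟨k, rfl⟩ : t = 1 ∨ ∃ k, t = k + 2 :=
    (Nat.lt_or_ge t 2).imp (by omega) fun h => ⟨t - 2, by omega⟩
  · calc (#(𝒮.filter fun s => 1 ≤ maxGap T s) : ℝ) ≤ #𝒮 := by
          exact_mod_cast card_le_card (filter_subset _ _)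
      _ ≤ T * exp (-(z * (1 : ℕ) / T)) * #𝒮 := by
          refine le_mul_of_one_le_left (by positivity) ?_
          simpa using one_le_mul_exp_neg_div (by positivity) hzT
  · calc (#(𝒮.filter fun s => k + 2 ≤ maxGap T s) : ℝ)
        ≤ (z + 1) * (T - (k + 2)).choose z := by
          exact_mod_cast card_filter_le_maxGap_le (by omega) hz1 (by omega)
      _ ≤ (z + 1) * ((T - 1).choose z * (1 - z / (T - 1)) ^ (k + 1)) := by
          rw [← hT1, show T - (k + 2) = T - 1 - (k + 1) by omega]
          gcongr
          exact Nat.choose_sub_le_choose_mul_pow hz2 _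
      _ = (z + 1) * (1 - z / (T - 1)) ^ (k + 1) * #𝒮 := by rw [h𝒮]; ring
      _ ≤ T * exp (-(z * (k + 2 : ℕ) / T)) * #𝒮 := by
          refine mul_le_mul_of_nonneg_right ?_ (Nat.cast_nonneg _)
          push_cast
          exact succ_mul_pow_le_mul_exp (by exact_mod_cast hT) (by positivity) hzT k
end

section
/- Let f: datasets → ℝ have ℓ2-sensitivity Δ, let ε, δ ∈ (0,1), and let σ² ≥ Δ²·2·ln(1.25/δ)/ε². Then the Gaussian mechanism A(D) = f(D) + Z with Z ∼ N(0, σ²) is (ε, δ)-differentially private. -/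
/-!
For means `b ≤ a` with `a - b ≤ Δ`, the privacy loss `((x - b)² - (x - a)²) / (2σ²)`, the log of
the ratio of the densities of `N(a, σ²)` and `N(b, σ²)` at `x`, is at most `ε` except on the tail
`x > a + τ`, `τ = σ²ε/Δ - Δ/2`; the case `a < b` follows by reflecting `x ↦ -x`. Hence
`P_a(S) ≤ e^ε P_b(S) + P(Z > τ)` with `Z ∼ N(0, σ²)`, and the calibration of `σ²` makes this
tail at most `δ`. When `τ ≥ 0`, comparing densities with `N(τ, σ²)`, which gives `(τ, ∞)` mass
`1/2`, yields `P(Z > τ) ≤ e^{-τ²/2σ²}/2`. When `τ < 0`, necessarily `log (1.25/δ) < 1/4`, so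
`δ > 0.9` exceeds the crude bound `1/2 + |τ| / √(2πσ²)`.
-/

open MeasureTheory
open scoped NNReal

/-- `(ε,δ)`-differential privacy of a mechanism `A : datasets → output distributions`. -/
def IsDP {D O : Type*} [MeasurableSpace O] (neighbor : D → D → Prop)
    (A : D → Measure O) (ε δ : ℝ) : Prop :=
  ∀ x y, neighbor x y → ∀ s : Set O, MeasurableSet s →
    A x s ≤ ENNReal.ofReal (Real.exp ε) * A y s + ENNReal.ofReal δ

open Real Set
open scoped ENNReal

namespace ProbabilityTheory

variable {v : ℝ≥0}

lemma gaussianReal_neg_apply (μ : ℝ) (s : Set ℝ) :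
    gaussianReal (-μ) v (-s) = gaussianReal μ v s := by
  rw [← gaussianReal_map_neg, measurableEmbedding_neg.map_apply, neg_preimage, neg_neg]

lemma gaussianReal_Ioi_add (μ t : ℝ) :
    gaussianReal μ v (Ioi (μ + t)) = gaussianReal 0 v (Ioi t) := by
  have h := gaussianReal_map_add_const (μ := 0) (v := v) μ
  rw [zero_add] at h
  rw [← h, Measure.map_apply (measurable_add_const μ) measurableSet_Ioi,
    preimage_add_const_Ioi, add_sub_cancel_left]

lemma gaussianReal_Ioi_self (μ : ℝ) (hv : v ≠ 0) : gaussianReal μ v (Ioi μ) = 1 / 2 := by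
  have := nullSingletonClass_gaussianReal (μ := μ) hv
  have hsymm : gaussianReal μ v (Iic μ) = gaussianReal μ v (Ioi μ) := by
    have h := gaussianReal_map_const_sub (μ := μ) (v := v) (2 * μ)
    rw [show 2 * μ - μ = μ by ring] at h
    rw [← measure_congr Iio_ae_eq_Iic]
    conv_rhs => rw [← h]
    rw [Measure.map_apply (by fun_prop) measurableSet_Ioi]
    congr 1
    ext x
    simp only [mem_Iio, mem_preimage, mem_Ioi]
    constructor <;> intro <;> linarith
  have htot := measure_add_measure_compl (μ := gaussianReal μ v) (measurableSet_Ioi (a := μ))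
  rw [compl_Ioi, hsymm, measure_univ, ← two_mul] at htot
  rw [ENNReal.eq_div_iff two_ne_zero ENNReal.ofNat_ne_top, htot]

lemma gaussianPDFReal_eq_exp_mul (a b : ℝ) (v : ℝ≥0) (x : ℝ) :
    gaussianPDFReal a v x =
      exp (((x - b) ^ 2 - (x - a) ^ 2) / (2 * v)) * gaussianPDFReal b v x := by
  simp only [gaussianPDFReal]
  rw [mul_left_comm, ← exp_add]
  congr 2
  ring

lemma gaussianPDFReal_le_inv_sqrt (μ : ℝ) (v : ℝ≥0) (x : ℝ) :
    gaussianPDFReal μ v x ≤ (√(2 * π * v))⁻¹ := by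
  rw [gaussianPDFReal]
  refine mul_le_of_le_one_right (by positivity) (exp_le_one_iff.2 ?_)
  rw [neg_div]
  exact neg_nonpos.2 (by positivity)

lemma gaussianReal_le_exp_mul_of_forall_le {a b ε : ℝ} {s : Set ℝ} (hv : v ≠ 0)
    (h : ∀ x ∈ s, ((x - b) ^ 2 - (x - a) ^ 2) / (2 * v) ≤ ε) :
    gaussianReal a v s ≤ ENNReal.ofReal (exp ε) * gaussianReal b v s := by
  rw [gaussianReal_apply a hv, gaussianReal_apply b hv,
    ← lintegral_const_mul _ (measurable_gaussianPDF b v)]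
  refine setLIntegral_mono ((measurable_gaussianPDF b v).const_mul _) fun x hx => ?_
  rw [gaussianPDF, gaussianPDF, ← ENNReal.ofReal_mul (exp_pos ε).le,
    gaussianPDFReal_eq_exp_mul a b]
  gcongr
  exacts [gaussianPDFReal_nonneg .., h x hx]

lemma gaussianReal_Ioi_le_exp (hv : v ≠ 0) {t : ℝ} (ht : 0 ≤ t) :
    gaussianReal 0 v (Ioi t) ≤ ENNReal.ofReal (exp (-t ^ 2 / (2 * v)) / 2) :=
  calc gaussianReal 0 v (Ioi t)
      ≤ ENNReal.ofReal (exp (-t ^ 2 / (2 * v))) * gaussianReal t v (Ioi t) := by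
        refine gaussianReal_le_exp_mul_of_forall_le hv fun x (hx : t < x) => ?_
        gcongr
        nlinarith
    _ = ENNReal.ofReal (exp (-t ^ 2 / (2 * v)) / 2) := by
        rw [gaussianReal_Ioi_self t hv, mul_one_div, ENNReal.ofReal_div_of_pos two_pos,
          ENNReal.ofReal_ofNat]

lemma gaussianReal_Ioi_le_half_add (hv : v ≠ 0) {t : ℝ} (ht : t ≤ 0) :
    gaussianReal 0 v (Ioi t) ≤ ENNReal.ofReal (1 / 2 + -t / √(2 * π * v)) := by
  have hIoc : gaussianReal 0 v (Ioc t 0) ≤ ENNReal.ofReal (-t / √(2 * π * v)) :=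
    calc gaussianReal 0 v (Ioc t 0) = ∫⁻ x in Ioc t 0, gaussianPDF 0 v x :=
          gaussianReal_apply 0 hv _
      _ ≤ ∫⁻ _ in Ioc t 0, ENNReal.ofReal (√(2 * π * v))⁻¹ :=
          setLIntegral_mono measurable_const fun x _ =>
            ENNReal.ofReal_le_ofReal (gaussianPDFReal_le_inv_sqrt 0 v x)
      _ = ENNReal.ofReal (-t / √(2 * π * v)) := by
          rw [setLIntegral_const, volume_Ioc, ← ENNReal.ofReal_mul (by positivity), zero_sub,
            div_eq_inv_mul]
  calc gaussianReal 0 v (Ioi t) ≤ gaussianReal 0 v (Ioc t 0) + gaussianReal 0 v (Ioi 0) := by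
        rw [← Ioc_union_Ioi_eq_Ioi ht]
        exact measure_union_le _ _
    _ ≤ ENNReal.ofReal (-t / √(2 * π * v)) + ENNReal.ofReal (1 / 2) := by
        rw [gaussianReal_Ioi_self 0 hv, ENNReal.ofReal_div_of_pos two_pos, ENNReal.ofReal_one,
          ENNReal.ofReal_ofNat]
        gcongr
    _ = ENNReal.ofReal (1 / 2 + -t / √(2 * π * v)) := by
        rw [add_comm,
          ENNReal.ofReal_add (by norm_num) (div_nonneg (neg_nonneg.2 ht) (sqrt_nonneg _))]

lemma gaussianReal_le_exp_mul_add_of_le {a b Δ ε : ℝ} (hv : v ≠ 0) (hΔ : 0 < Δ) (hε : 0 ≤ ε)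
    (hba : b ≤ a) (habΔ : a - b ≤ Δ) (s : Set ℝ) :
    gaussianReal a v s ≤
      ENNReal.ofReal (exp ε) * gaussianReal b v s + gaussianReal 0 v (Ioi (v * ε / Δ - Δ / 2)) := by
  set τ := v * ε / Δ - Δ / 2 with hτ
  have hτΔ : τ * Δ = v * ε - Δ ^ 2 / 2 := by rw [hτ]; field_simp
  have hgood : ∀ x ∈ s \ Ioi (a + τ), ((x - b) ^ 2 - (x - a) ^ 2) / (2 * v) ≤ ε := by
    rintro x ⟨-, hx⟩
    have hxτ : (x - a) * Δ ≤ v * ε - Δ ^ 2 / 2 := by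
      rw [← hτΔ]
      exact mul_le_mul_of_nonneg_right (by simp only [mem_Ioi, not_lt] at hx; linarith) hΔ.le
    rw [div_le_iff₀ (by positivity)]
    -- `(x - b)² - (x - a)² = 2d(x - a) + d²` is convex in `d = a - b ∈ [0, Δ]`
    refine le_of_mul_le_mul_left ?_ hΔ
    nlinarith [mul_le_mul_of_nonneg_left hxτ (sub_nonneg.2 hba),
      mul_nonneg (sub_nonneg.2 habΔ) (add_nonneg (mul_nonneg (by positivity : (0:ℝ) ≤ 2 * v) hε)
        (mul_nonneg (sub_nonneg.2 hba) hΔ.le))]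
  calc gaussianReal a v s
      ≤ gaussianReal a v (s \ Ioi (a + τ)) + gaussianReal a v (Ioi (a + τ)) :=
        (measure_mono (sdiff_union_self (s := s) ▸ subset_union_left)).trans (measure_union_le _ _)
    _ ≤ ENNReal.ofReal (exp ε) * gaussianReal b v s + gaussianReal 0 v (Ioi τ) := by
        rw [gaussianReal_Ioi_add]
        gcongr
        exact (gaussianReal_le_exp_mul_of_forall_le hv hgood).trans
          (by gcongr; exact sdiff_subset)

lemma gaussianReal_le_exp_mul_add {a b Δ ε : ℝ} (hv : v ≠ 0) (hΔ : 0 < Δ) (hε : 0 ≤ ε)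
    (hab : |a - b| ≤ Δ) (s : Set ℝ) :
    gaussianReal a v s ≤
      ENNReal.ofReal (exp ε) * gaussianReal b v s + gaussianReal 0 v (Ioi (v * ε / Δ - Δ / 2)) := by
  rcases le_total b a with hba | hab'
  · exact gaussianReal_le_exp_mul_add_of_le hv hΔ hε hba ((le_abs_self _).trans hab) s
  · have hneg := gaussianReal_le_exp_mul_add_of_le (a := -a) (b := -b) hv hΔ hε
      (neg_le_neg hab') (by linarith [neg_abs_le (a - b)]) (-s)
    rwa [gaussianReal_neg_apply, gaussianReal_neg_apply] at hneg

end ProbabilityTheory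

open ProbabilityTheory

namespace GaussianMechanism

lemma exp_tail_le_delta {v Δ ε δ : ℝ} (hv : 0 < v) (hΔ : 0 < Δ) (hε1 : ε < 1)
    (hδ0 : 0 < δ) (hσ : 2 * Δ ^ 2 * log (1.25 / δ) ≤ v * ε ^ 2) :
    exp (-(v * ε / Δ - Δ / 2) ^ 2 / (2 * v)) / 2 ≤ δ := by
  set L := log (1.25 / δ)
  have hexponent : -(v * ε / Δ - Δ / 2) ^ 2 / (2 * v) ≤ 1 / 2 - L := by
    have hw : v * ε / Δ * Δ = v * ε := div_mul_cancel₀ _ hΔ.ne'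
    have hw2 : 2 * v * L ≤ (v * ε / Δ) ^ 2 := by
      refine le_of_mul_le_mul_right ?_ (by positivity : 0 < Δ ^ 2)
      rw [← mul_pow, hw]
      nlinarith [mul_le_mul_of_nonneg_left hσ hv.le]
    rw [div_le_iff₀ (by positivity)]
    nlinarith
  have hexpL : exp (-L) = 0.8 * δ := by
    rw [exp_neg, exp_log (by positivity), inv_div]
    ring
  have hexp_half : exp (1 / 2) ≤ 2 := by
    have := exp_bound_div_one_sub_of_interval (x := 1 / 2) (by norm_num) (by norm_num)
    norm_num at this ⊢
    linarith
  calc exp (-(v * ε / Δ - Δ / 2) ^ 2 / (2 * v)) / 2 ≤ exp (1 / 2 - L) / 2 := by gcongr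
    _ = exp (1 / 2) * exp (-L) / 2 := by rw [sub_eq_add_neg, exp_add]
    _ ≤ 2 * (0.8 * δ) / 2 := by rw [hexpL]; gcongr
    _ ≤ δ := by linarith

lemma half_add_tail_le_delta {v Δ ε δ : ℝ} (hv : 0 < v) (hΔ : 0 < Δ) (hε0 : 0 < ε)
    (hε1 : ε < 1) (hδ0 : 0 < δ) (hδ1 : δ < 1)
    (hσ : 2 * Δ ^ 2 * log (1.25 / δ) ≤ v * ε ^ 2) (hτ : v * ε / Δ - Δ / 2 < 0) :
    1 / 2 + -(v * ε / Δ - Δ / 2) / √(2 * π * v) ≤ δ := by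
  set L := log (1.25 / δ)
  have hvε : v * ε < Δ ^ 2 / 2 := by
    have := mul_lt_mul_of_pos_right hτ hΔ
    rwa [sub_mul, div_mul_cancel₀ _ hΔ.ne', zero_mul, sub_neg, div_mul_eq_mul_div, ← sq] at this
  have hL_lt : L < 1 / 4 := by nlinarith
  have hL_ge : 0.2 ≤ L := by
    have h : 1 - (1.25 / δ)⁻¹ ≤ L := one_sub_inv_le_log_of_pos (by positivity)
    rw [inv_div] at h
    norm_num at h ⊢
    linarith
  have hδ : 0.9 ≤ δ := by
    have h1 : 1.25 / δ < exp (1 / 4) := by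
      rw [← exp_log (by positivity : 0 < 1.25 / δ)]
      exact exp_lt_exp.2 hL_lt
    have h2 := exp_bound_div_one_sub_of_interval (x := 1 / 4) (by norm_num) (by norm_num)
    rw [div_lt_iff₀ hδ0] at h1
    norm_num at h2
    nlinarith
  have hsqrt : 1.5 * Δ ≤ √(2 * π * v) := by
    have hvΔ : 0.4 * Δ ^ 2 ≤ v := by
      have hε2 : v * ε ^ 2 ≤ v := mul_le_of_le_one_right hv.le (by nlinarith)
      nlinarith [mul_le_mul_of_nonneg_left hL_ge (sq_nonneg Δ)]
    refine le_sqrt_of_sq_le ?_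
    nlinarith [pi_gt_three]
  have hnum : -(v * ε / Δ - Δ / 2) ≤ Δ / 2 := by
    have : 0 < v * ε / Δ := by positivity
    linarith
  have hfrac : -(v * ε / Δ - Δ / 2) / √(2 * π * v) ≤ 1 / 3 := by
    rw [div_le_iff₀ (by positivity)]
    linarith
  linarith

lemma gaussianReal_tail_le_delta {Δ ε δ : ℝ} {v : ℝ≥0} (hv : 0 < (v : ℝ)) (hΔ : 0 < Δ)
    (hε0 : 0 < ε) (hε1 : ε < 1) (hδ0 : 0 < δ) (hδ1 : δ < 1)
    (hσ : 2 * Δ ^ 2 * log (1.25 / δ) ≤ v * ε ^ 2) :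
    gaussianReal 0 v (Ioi (v * ε / Δ - Δ / 2)) ≤ ENNReal.ofReal δ := by
  have hv0 : v ≠ 0 := (NNReal.coe_pos.1 hv).ne'
  rcases le_or_gt 0 (v * ε / Δ - Δ / 2) with hτ | hτ
  · exact (gaussianReal_Ioi_le_exp hv0 hτ).trans
      (ENNReal.ofReal_le_ofReal (exp_tail_le_delta hv hΔ hε1 hδ0 hσ))
  · exact (gaussianReal_Ioi_le_half_add hv0 hτ.le).trans
      (ENNReal.ofReal_le_ofReal (half_add_tail_le_delta hv hΔ hε0 hε1 hδ0 hδ1 hσ hτ))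

end GaussianMechanism

/-- Gaussian mechanism: if `f` has ℓ₂-sensitivity `Δ`, `ε, δ ∈ (0,1)`, and
`σ² ≥ Δ²·2·ln(1.25/δ)/ε²`, then releasing `f(D) + N(0, σ²)` is `(ε,δ)`-DP. -/
theorem gaussian_mechanism {D : Type*} (neighbor : D → D → Prop)
    (f : D → ℝ) (Δ : ℝ) (hΔ : ∀ x y, neighbor x y → |f x - f y| ≤ Δ)
    (ε δ : ℝ) (hε0 : 0 < ε) (hε1 : ε < 1) (hδ0 : 0 < δ) (hδ1 : δ < 1)
    (σ2 : ℝ≥0) (hσ : Δ ^ 2 * (2 * Real.log (1.25 / δ)) / ε ^ 2 ≤ (σ2 : ℝ)) :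
    IsDP neighbor (fun x => ProbabilityTheory.gaussianReal (f x) σ2) ε δ := by
  intro x y hxy s _
  rcases eq_or_ne (f x) (f y) with hfxy | hfxy
  · simp only [hfxy]
    exact le_add_right (le_mul_of_one_le_left' (ENNReal.one_le_ofReal.2 (one_le_exp hε0.le)))
  have hΔ0 : 0 < Δ := (abs_pos.2 (sub_ne_zero.2 hfxy)).trans_le (hΔ x y hxy)
  have hL : 0 < log (1.25 / δ) := log_pos (by rw [lt_div_iff₀ hδ0]; linarith)
  have hv : 0 < (σ2 : ℝ) := lt_of_lt_of_le (by positivity) hσ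
  have hσ' : 2 * Δ ^ 2 * log (1.25 / δ) ≤ σ2 * ε ^ 2 := by
    rw [div_le_iff₀ (by positivity)] at hσ
    linarith
  exact (gaussianReal_le_exp_mul_add (NNReal.coe_pos.1 hv).ne' hΔ0 hε0.le (hΔ x y hxy) s).trans
    (add_le_add_right (GaussianMechanism.gaussianReal_tail_le_delta hv hΔ0 hε0 hε1 hδ0 hδ1 hσ') _)
end

section
/- For μ > 0 and ε > 0 define δ_μ(ε) = Φ(−ε/μ + μ/2) − e^ε·Φ(−ε/μ − μ/2), where Φ is the standard normal CDF. Then δ_μ(ε) ∈ [0, 1) for all ε > 0, δ_μ is nonincreasing in ε, and δ_μ(ε) → 0 as ε → ∞. -/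
open Filter

/-- The standard normal CDF `Φ`. -/
noncomputable def Phi (x : ℝ) : ℝ :=
  (Real.sqrt (2 * Real.pi))⁻¹ * ∫ t in Set.Iic x, Real.exp (-t ^ 2 / 2)

/-- The `(ε,δ)`-DP curve of a `μ`-GDP mechanism:
`δ_μ(ε) = Φ(−ε/μ + μ/2) − e^ε·Φ(−ε/μ − μ/2)`. -/
noncomputable def deltaMu (μ ε : ℝ) : ℝ :=
  Phi (-ε / μ + μ / 2) - Real.exp ε * Phi (-ε / μ - μ / 2)

open MeasureTheory Set in
private lemma gauss_integrable : Integrable (fun t : ℝ => Real.exp (-t ^ 2 / 2)) := by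
  have h := integrable_exp_neg_mul_sq (b := (1:ℝ)/2) (by norm_num)
  have : (fun t : ℝ => Real.exp (-t ^ 2 / 2)) = fun t : ℝ => Real.exp (-(1/2) * t ^ 2) := by
    funext t; ring_nf
  rw [this]; exact h

open MeasureTheory Set in
private lemma gauss_total : (∫ t : ℝ, Real.exp (-t ^ 2 / 2)) = Real.sqrt (2 * Real.pi) := by
  have : (fun t : ℝ => Real.exp (-t ^ 2 / 2)) = fun t : ℝ => Real.exp (-(1/2) * t ^ 2) := by
    funext t; ring_nf
  rw [this, integral_gaussian, show Real.pi / (1/2) = 2 * Real.pi by ring]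

open MeasureTheory Set in
private lemma G_pos (x : ℝ) : 0 < ∫ t in Iic x, Real.exp (-t ^ 2 / 2) := by
  rw [setIntegral_pos_iff_support_of_nonneg_ae
    (ae_of_all _ fun t => (Real.exp_pos _).le) gauss_integrable.integrableOn]
  have : Function.support (fun t : ℝ => Real.exp (-t ^ 2 / 2)) = Set.univ := by
    ext t; simp [Function.mem_support, (Real.exp_pos _).ne']
  rw [this, Set.univ_inter]
  simp

open MeasureTheory Set in
private lemma G_pos_Ioi (x : ℝ) : 0 < ∫ t in Ioi x, Real.exp (-t ^ 2 / 2) := by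
  rw [setIntegral_pos_iff_support_of_nonneg_ae
    (ae_of_all _ fun t => (Real.exp_pos _).le) gauss_integrable.integrableOn]
  have : Function.support (fun t : ℝ => Real.exp (-t ^ 2 / 2)) = Set.univ := by
    ext t; simp [Function.mem_support, (Real.exp_pos _).ne']
  rw [this, Set.univ_inter]
  simp

open MeasureTheory Set in
private lemma G_lt_total (x : ℝ) :
    (∫ t in Iic x, Real.exp (-t ^ 2 / 2)) < Real.sqrt (2 * Real.pi) := by
  rw [← gauss_total, ← intervalIntegral.integral_Iic_add_Ioi
    gauss_integrable.integrableOn gauss_integrable.integrableOn]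
  exact lt_add_of_pos_right _ (G_pos_Ioi x)

private lemma sqrt2pi_pos : 0 < Real.sqrt (2 * Real.pi) :=
  Real.sqrt_pos.2 (by positivity)

open MeasureTheory Set in
private lemma Phi_nonneg (x : ℝ) : 0 ≤ Phi x :=
  mul_nonneg (inv_nonneg.2 (Real.sqrt_nonneg _)) (G_pos x).le

open MeasureTheory Set in
private lemma Phi_pos (x : ℝ) : 0 < Phi x :=
  mul_pos (inv_pos.2 sqrt2pi_pos) (G_pos x)

open MeasureTheory Set in
private lemma Phi_lt_one (x : ℝ) : Phi x < 1 := by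
  have h := G_lt_total x
  have := inv_pos.2 sqrt2pi_pos
  calc Phi x < (Real.sqrt (2 * Real.pi))⁻¹ * Real.sqrt (2 * Real.pi) := by
        exact mul_lt_mul_of_pos_left h this
    _ = 1 := inv_mul_cancel₀ sqrt2pi_pos.ne'

open MeasureTheory Set in
private lemma G_shift (μ b : ℝ) :
    (∫ t in Iic b, Real.exp (-(t + μ) ^ 2 / 2)) = ∫ t in Iic (b + μ), Real.exp (-t ^ 2 / 2) := by
  have h := (measurePreserving_add_right (volume : Measure ℝ) μ).setIntegral_preimage_emb
    (measurableEmbedding_addRight μ) (fun t => Real.exp (-t ^ 2 / 2)) (Iic (b + μ))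
  rw [Set.preimage_add_const_Iic, add_sub_cancel_right] at h
  exact h

open MeasureTheory Set in
private lemma key_pointwise {μ ε t : ℝ} (hμ : 0 < μ) (ht : t ≤ -ε / μ - μ / 2) :
    Real.exp ε * Real.exp (-t ^ 2 / 2) ≤ Real.exp (-(t + μ) ^ 2 / 2) := by
  have h1 : Real.exp (-(t + μ) ^ 2 / 2) = Real.exp (-μ * t - μ ^ 2 / 2) * Real.exp (-t ^ 2 / 2) := by
    rw [← Real.exp_add]; ring_nf
  rw [h1]
  apply mul_le_mul_of_nonneg_right _ (Real.exp_pos _).le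
  apply Real.exp_le_exp.2
  have : μ * t ≤ μ * (-ε / μ - μ / 2) := mul_le_mul_of_nonneg_left ht hμ.le
  rw [mul_sub, mul_div_cancel₀ _ hμ.ne'] at this
  linarith

open MeasureTheory Set in
private lemma deltaMu_repr (μ ε : ℝ) (hμ : 0 < μ) :
    deltaMu μ ε = (Real.sqrt (2 * Real.pi))⁻¹ *
      ∫ t in Iic (-ε / μ - μ / 2),
        (Real.exp (-(t + μ) ^ 2 / 2) - Real.exp ε * Real.exp (-t ^ 2 / 2)) := by
  have hint1 : IntegrableOn (fun t : ℝ => Real.exp (-(t + μ) ^ 2 / 2)) (Iic (-ε / μ - μ / 2)) :=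
    (gauss_integrable.comp_add_right μ).integrableOn
  have hint2 : IntegrableOn (fun t : ℝ => Real.exp ε * Real.exp (-t ^ 2 / 2))
      (Iic (-ε / μ - μ / 2)) := (gauss_integrable.const_mul _).integrableOn
  rw [integral_sub hint1 hint2, G_shift, integral_const_mul _ _]
  have hab : -ε / μ - μ / 2 + μ = -ε / μ + μ / 2 := by ring
  rw [hab]
  unfold deltaMu Phi
  ring

open MeasureTheory Set in
private lemma integrand_nonneg (μ ε : ℝ) (hμ : 0 < μ) :
    ∀ t ∈ Iic (-ε / μ - μ / 2),
      0 ≤ Real.exp (-(t + μ) ^ 2 / 2) - Real.exp ε * Real.exp (-t ^ 2 / 2) := fun t ht =>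
  sub_nonneg.2 (key_pointwise hμ ht)

open MeasureTheory Set in
private lemma G_tendsto_atBot :
    Tendsto (fun x : ℝ => ∫ t in Iic x, Real.exp (-t ^ 2 / 2)) atBot (nhds 0) := by
  have cover : AECover (volume : Measure ℝ) atBot (fun x : ℝ => Ici x) :=
    aecover_Ici tendsto_id
  have hIci := cover.integral_tendsto_of_countably_generated gauss_integrable
  have heq : ∀ x : ℝ, (∫ t in Iic x, Real.exp (-t ^ 2 / 2)) =
      (∫ t : ℝ, Real.exp (-t ^ 2 / 2)) - ∫ t in Ici x, Real.exp (-t ^ 2 / 2) := by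
    intro x
    rw [integral_Ici_eq_integral_Ioi, ← intervalIntegral.integral_Iic_add_Ioi
      gauss_integrable.integrableOn gauss_integrable.integrableOn]
    ring
  simp_rw [heq]
  have := (tendsto_const_nhds (x := ∫ t : ℝ, Real.exp (-t ^ 2 / 2)) (f := atBot (α := ℝ))).sub hIci
  simpa using this

/-- For `μ > 0`: `δ_μ(ε) ∈ [0,1)` for all `ε > 0`, `δ_μ` is nonincreasing in `ε` on `(0,∞)`,
and `δ_μ(ε) → 0` as `ε → ∞`. -/
theorem deltaMu_properties (μ : ℝ) (hμ : 0 < μ) :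
    (∀ ε > 0, 0 ≤ deltaMu μ ε ∧ deltaMu μ ε < 1) ∧
    AntitoneOn (deltaMu μ) (Set.Ioi 0) ∧
    Tendsto (deltaMu μ) atTop (nhds 0) := by
  have hnonneg : ∀ ε : ℝ, 0 ≤ deltaMu μ ε := by
    intro ε
    rw [deltaMu_repr μ ε hμ]
    exact mul_nonneg (inv_nonneg.2 (Real.sqrt_nonneg _))
      (MeasureTheory.setIntegral_nonneg measurableSet_Iic (integrand_nonneg μ ε hμ))
  have hle : ∀ ε : ℝ, deltaMu μ ε ≤ Phi (-ε / μ + μ / 2) := by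
    intro ε
    have : 0 ≤ Real.exp ε * Phi (-ε / μ - μ / 2) :=
      mul_nonneg (Real.exp_pos _).le (Phi_nonneg _)
    unfold deltaMu
    linarith
  refine ⟨fun ε hε => ⟨hnonneg ε, ?_⟩, ?_, ?_⟩
  · calc deltaMu μ ε ≤ Phi (-ε / μ + μ / 2) := hle ε
      _ < 1 := Phi_lt_one _
  · intro ε₁ _ ε₂ _ h12
    rw [deltaMu_repr μ ε₁ hμ, deltaMu_repr μ ε₂ hμ]
    apply mul_le_mul_of_nonneg_left _ (inv_nonneg.2 (Real.sqrt_nonneg _))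
    have hb : -ε₂ / μ - μ / 2 ≤ -ε₁ / μ - μ / 2 := by
      have h : -ε₂ / μ ≤ -ε₁ / μ := by gcongr
      linarith
    have hintall : ∀ ε' : ℝ, MeasureTheory.Integrable
        (fun t : ℝ => Real.exp (-(t + μ) ^ 2 / 2) - Real.exp ε' * Real.exp (-t ^ 2 / 2)) :=
      fun ε' => (gauss_integrable.comp_add_right μ).sub (gauss_integrable.const_mul _)
    have hint1 : MeasureTheory.IntegrableOn
        (fun t : ℝ => Real.exp (-(t + μ) ^ 2 / 2) - Real.exp ε₁ * Real.exp (-t ^ 2 / 2))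
        (Set.Iic (-ε₁ / μ - μ / 2)) := (hintall ε₁).integrableOn
    calc (∫ t in Set.Iic (-ε₂ / μ - μ / 2),
          (Real.exp (-(t + μ) ^ 2 / 2) - Real.exp ε₂ * Real.exp (-t ^ 2 / 2)))
        ≤ ∫ t in Set.Iic (-ε₂ / μ - μ / 2),
          (Real.exp (-(t + μ) ^ 2 / 2) - Real.exp ε₁ * Real.exp (-t ^ 2 / 2)) := by
          apply MeasureTheory.setIntegral_mono_on
            (hintall ε₂).integrableOn (hintall ε₁).integrableOn measurableSet_Iic
          intro t _
          have := mul_le_mul_of_nonneg_right (Real.exp_le_exp.2 h12) (Real.exp_pos (-t ^ 2 / 2)).le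
          linarith
      _ ≤ ∫ t in Set.Iic (-ε₁ / μ - μ / 2),
          (Real.exp (-(t + μ) ^ 2 / 2) - Real.exp ε₁ * Real.exp (-t ^ 2 / 2)) := by
          apply MeasureTheory.setIntegral_mono_set hint1
          · filter_upwards [MeasureTheory.self_mem_ae_restrict measurableSet_Iic] with t ht
            exact integrand_nonneg μ ε₁ hμ t ht
          · exact HasSubset.Subset.eventuallyLE (Set.Iic_subset_Iic.2 hb)
  · have ha : Tendsto (fun ε : ℝ => -ε / μ + μ / 2) atTop atBot := by
      apply tendsto_atBot_add_const_right
      have : Tendsto (fun ε : ℝ => ε / μ) atTop atTop := tendsto_id.atTop_div_const hμ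
      have h2 := tendsto_neg_atTop_atBot.comp this
      exact h2.congr fun ε => by simp [Function.comp, neg_div]
    have hPhi : Tendsto (fun ε : ℝ => Phi (-ε / μ + μ / 2)) atTop (nhds 0) := by
      have := (G_tendsto_atBot.comp ha).const_mul (Real.sqrt (2 * Real.pi))⁻¹
      simpa [Phi, Function.comp] using this
    exact tendsto_of_tendsto_of_tendsto_of_le_of_le tendsto_const_nhds hPhi
      (fun ε => hnonneg ε) (fun ε => hle ε)
end

section
/- Let P = N(0,1) and Q = N(μ,1) for μ > 0. For any event S (measurable subset of ℝ), Q(S) − e^ε·P(S) ≤ Φ(−ε/μ + μ/2) − e^ε·Φ(−ε/μ − μ/2), with equality when S = {x : log(dQ/dP)(x) ≥ ε} = {x : x ≥ ε/μ + μ/2}. -/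
/-! The excess `Q(S) − e^ε P(S)` is the integral over `S` of `q − e^ε p`, where `p`, `q` are the
densities of `P`, `Q`, so it is maximised by the Neyman–Pearson set `{q ≥ e^ε p}`. For Gaussians
the log-likelihood ratio `μx − μ²/2` is increasing in `x`, so that set is the half-line
`[ε/μ + μ/2, ∞)`, whose probabilities under `P` and `Q` are values of `Φ`. -/

open MeasureTheory ProbabilityTheory

open scoped NNReal

lemma gaussianReal_toReal_eq_setIntegral (m : ℝ) {v : ℝ≥0} (hv : v ≠ 0) (S : Set ℝ) :
    (gaussianReal m v S).toReal = ∫ x in S, gaussianPDFReal m v x := by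
  rw [gaussianReal_apply_eq_integral m hv S, ENNReal.toReal_ofReal]
  exact integral_nonneg fun x => gaussianPDFReal_nonneg m v x

lemma gaussianReal_toReal_sub_mul_eq_setIntegral (m₁ m₂ a : ℝ) {v : ℝ≥0} (hv : v ≠ 0)
    (S : Set ℝ) :
    (gaussianReal m₁ v S).toReal - a * (gaussianReal m₂ v S).toReal
      = ∫ x in S, (gaussianPDFReal m₁ v x - a * gaussianPDFReal m₂ v x) := by
  rw [gaussianReal_toReal_eq_setIntegral _ hv, gaussianReal_toReal_eq_setIntegral _ hv,
    ← integral_const_mul, ← integral_sub (integrable_gaussianPDFReal m₁ v).integrableOn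
      ((integrable_gaussianPDFReal m₂ v).const_mul a).integrableOn]

lemma Phi_eq_gaussianReal_Iic (a : ℝ) : Phi a = (gaussianReal 0 1 (Set.Iic a)).toReal := by
  rw [gaussianReal_toReal_eq_setIntegral 0 one_ne_zero, Phi, ← integral_const_mul]
  exact setIntegral_congr_fun measurableSet_Iic fun x _ => by simp [gaussianPDFReal]

lemma gaussianReal_Ici_toReal (m c : ℝ) :
    (gaussianReal m 1 (Set.Ici c)).toReal = Phi (m - c) := by
  have hreflect : (gaussianReal 0 1).map (m - ·) = gaussianReal m 1 := by
    simpa using gaussianReal_map_const_sub (μ := 0) (v := 1) m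
  have hpre : (m - ·) ⁻¹' Set.Ici c = Set.Iic (m - c) := by
    ext x
    simp only [Set.mem_preimage, Set.mem_Ici, Set.mem_Iic]
    constructor <;> intro h <;> linarith
  rw [← hreflect, Measure.map_apply (by fun_prop) measurableSet_Ici, hpre, Phi_eq_gaussianReal_Iic]

lemma exp_mul_gaussianPDFReal_zero_le_iff {μ : ℝ} (hμ : 0 < μ) (ε x : ℝ) :
    Real.exp ε * gaussianPDFReal 0 1 x ≤ gaussianPDFReal μ 1 x ↔ ε / μ + μ / 2 ≤ x := by
  simp only [gaussianPDFReal, NNReal.coe_one]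
  rw [mul_left_comm, mul_le_mul_iff_right₀ (by positivity), ← Real.exp_add, Real.exp_le_exp,
    ← sub_nonneg, ← sub_nonneg (b := _ + _), ← mul_nonneg_iff_of_pos_left hμ]
  constructor <;> intro h <;> field_simp at * <;> nlinarith

theorem gaussian_dp_tradeoff_general (μ ε : ℝ) (hμ : 0 < μ) :
    (∀ S : Set ℝ, MeasurableSet S →
      (gaussianReal μ 1 S).toReal - Real.exp ε * (gaussianReal 0 1 S).toReal
        ≤ Phi (-ε / μ + μ / 2) - Real.exp ε * Phi (-ε / μ - μ / 2)) ∧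
    ((gaussianReal μ 1 {x : ℝ | ε / μ + μ / 2 ≤ x}).toReal
        - Real.exp ε * (gaussianReal 0 1 {x : ℝ | ε / μ + μ / 2 ≤ x}).toReal
      = Phi (-ε / μ + μ / 2) - Real.exp ε * Phi (-ε / μ - μ / 2)) := by
  set f : ℝ → ℝ := fun x => gaussianPDFReal μ 1 x - Real.exp ε * gaussianPDFReal 0 1 x
  have hf_nonneg : {x | 0 ≤ f x} = {x | ε / μ + μ / 2 ≤ x} := by
    ext x
    exact sub_nonneg.trans (exp_mul_gaussianPDFReal_zero_le_iff hμ ε x)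
  have h_half_line : (gaussianReal μ 1 {x : ℝ | ε / μ + μ / 2 ≤ x}).toReal
        - Real.exp ε * (gaussianReal 0 1 {x : ℝ | ε / μ + μ / 2 ≤ x}).toReal
      = Phi (-ε / μ + μ / 2) - Real.exp ε * Phi (-ε / μ - μ / 2) := by
    rw [← Set.Ici.eq_1, gaussianReal_Ici_toReal, gaussianReal_Ici_toReal]
    ring_nf
  refine ⟨fun S hS => ?_, h_half_line⟩
  have hf_meas : Measurable f := by unfold f; fun_prop
  have hf_int : Integrable f :=
    (integrable_gaussianPDFReal μ 1).sub ((integrable_gaussianPDFReal 0 1).const_mul _)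
  rw [← h_half_line, gaussianReal_toReal_sub_mul_eq_setIntegral _ _ _ one_ne_zero,
    gaussianReal_toReal_sub_mul_eq_setIntegral _ _ _ one_ne_zero, ← hf_nonneg]
  exact setIntegral_le_nonneg hS hf_meas.stronglyMeasurable hf_int

/-- For `P = N(0,1)` and `Q = N(μ,1)` with `μ > 0`, and any measurable event `S`,
`Q(S) − e^ε·P(S) ≤ Φ(−ε/μ + μ/2) − e^ε·Φ(−ε/μ − μ/2)`, with equality when
`S = {x : x ≥ ε/μ + μ/2}` (the likelihood-ratio event `{log(dQ/dP) ≥ ε}`). -/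
theorem gaussian_dp_tradeoff (μ ε : ℝ) (hμ : 0 < μ) (hε : 0 < ε) :
    (∀ S : Set ℝ, MeasurableSet S →
      (gaussianReal μ 1 S).toReal - Real.exp ε * (gaussianReal 0 1 S).toReal
        ≤ Phi (-ε / μ + μ / 2) - Real.exp ε * Phi (-ε / μ - μ / 2)) ∧
    ((gaussianReal μ 1 {x : ℝ | ε / μ + μ / 2 ≤ x}).toReal
        - Real.exp ε * (gaussianReal 0 1 {x : ℝ | ε / μ + μ / 2 ≤ x}).toReal
      = Phi (-ε / μ + μ / 2) - Real.exp ε * Phi (-ε / μ - μ / 2)) :=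
  gaussian_dp_tradeoff_general μ ε hμ
end
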